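/- Let μ be a compactly supported probability measure on ℝ with cdf F and quantile function F^{-1}. Then for all ρ ≥ 1 and all N ≥ 1, e_N(μ,ρ) ≤ (F^{-1}(1) − F^{-1}(0+)) / (2N)^{1/ρ}, where e_N(μ,ρ) is the minimal Wasserstein-ρ distance between μ and a uniform empirical measure on N points. -/

import Mathlib

open MeasureTheory ProbabilityTheory Filter Set

/-- Distance from `x` to the nearest nonnegative integer. -/
noncomputable def nnd (x : ℝ) : ℝ := ⨅ j : ℕ, |x - (j : ℝ)|

/-- Left-continuous quantile function of `μ`. -/
noncomputable def qf (μ : Measure ℝ) (u : ℝ) : ℝ := sInf {x : ℝ | u ≤ cdf μ x}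

/-- Minimal Wasserstein-`ρ` distance between `μ` and empirical measures on `N` points,
expressed through the quantile formula for the Wasserstein distance on `ℝ`. -/
noncomputable def eN (μ : Measure ℝ) (ρ : ℝ) (N : ℕ) : ℝ :=
  sInf ((fun x : Fin N → ℝ =>
      (∑ i : Fin N,
        ∫ u in Set.Ioc ((i : ℝ) / N) (((i : ℝ) + 1) / N), |x i - qf μ u| ^ ρ) ^ (1 / ρ)) ''
    {x : Fin N → ℝ | Monotone x})

/-!
Extend the quantile function from `(0, 1)` to a monotone `G : ℝ → ℝ` with `G 0 = F⁻¹(0+)` and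
`G 1 = F⁻¹(1-)`, and put `xᵢ = G mᵢ` at the midpoint `mᵢ` of the `i`-th cell `Iᵢ` of length
`1 / N`. With `D = G 1 - G 0 ≥ |xᵢ - G u|`, the bound `t ^ ρ ≤ D ^ (ρ - 1) * t` reduces the cost
to `ρ = 1`. Monotonicity gives `∫_{Iᵢ} |G mᵢ - G u| ≤ (G (sup Iᵢ) - G (inf Iᵢ)) / (2N)`, and these
oscillations telescope to `D`, so the total cost is at most `D ^ ρ / (2N)`.
-/

theorem Real.rpow_le_rpow_sub_one_mul {t D ρ : ℝ} (ht : 0 ≤ t) (htD : t ≤ D) (hρ : 1 ≤ ρ) :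
    t ^ ρ ≤ D ^ (ρ - 1) * t := by
  calc t ^ ρ = t ^ (ρ - 1) * t := by
        rw [← Real.rpow_add_one' ht (by linarith), sub_add_cancel]
    _ ≤ D ^ (ρ - 1) * t := by gcongr

theorem Real.rpow_sub_one_mul_self {D ρ : ℝ} (hD : 0 ≤ D) (hρ : ρ ≠ 0) :
    D ^ (ρ - 1) * D = D ^ ρ := by
  rw [← Real.rpow_add_one' hD (by simpa using hρ), sub_add_cancel]

theorem MonotoneOn.monotone_ite_Ioo {α β : Type*} [LinearOrder α] [Preorder β] {f : α → β}
    {p q : α} {a b : β} (hf : MonotoneOn f (Ioo p q)) (ha : ∀ u ∈ Ioo p q, a ≤ f u)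
    (hb : ∀ u ∈ Ioo p q, f u ≤ b) (hab : a ≤ b) :
    Monotone fun u => if u ≤ p then a else if q ≤ u then b else f u := by
  intro u v huv
  dsimp only
  split_ifs <;> first
    | exact le_rfl
    | exact hab
    | exact absurd (huv.trans ‹v ≤ p›) ‹¬u ≤ p›
    | exact absurd (‹q ≤ u›.trans huv) ‹¬q ≤ v›
    | exact ha v ⟨lt_of_not_ge ‹¬v ≤ p›, lt_of_not_ge ‹¬q ≤ v›⟩
    | exact hb u ⟨lt_of_not_ge ‹¬u ≤ p›, lt_of_not_ge ‹¬q ≤ u›⟩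
    | exact hf ⟨lt_of_not_ge ‹¬u ≤ p›, lt_of_not_ge ‹¬q ≤ u›⟩
        ⟨lt_of_not_ge ‹¬v ≤ p›, lt_of_not_ge ‹¬q ≤ v›⟩ huv

theorem Monotone.integrableOn_abs_sub {G : ℝ → ℝ} (hG : Monotone G) (c l r : ℝ) :
    IntegrableOn (fun u => |c - G u|) (Ioc l r) :=
  ((integrable_const c).sub ((hG.locallyIntegrable.integrableOn_isCompact isCompact_Icc).mono_set
    Ioc_subset_Icc_self)).abs

theorem Monotone.integral_Ioc_abs_sub_midpoint_le {G : ℝ → ℝ} (hG : Monotone G) {l r : ℝ}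
    (hlr : l ≤ r) :
    ∫ u in Ioc l r, |G ((l + r) / 2) - G u| ≤ (r - l) / 2 * (G r - G l) := by
  have hlm : l ≤ (l + r) / 2 := by linarith
  have hmr : (l + r) / 2 ≤ r := by linarith
  set m := (l + r) / 2
  have hhalf : ∀ {p q C : ℝ}, p ≤ q → (∀ u ∈ Ioc p q, |G m - G u| ≤ C) →
      ∫ u in Ioc p q, |G m - G u| ≤ C * (q - p) := fun hpq hC => by
    have := norm_setIntegral_le_of_norm_le_const (f := fun u => |G m - G u|) (μ := volume)
      measure_Ioc_lt_top fun u hu => by simpa using hC u hu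
    rw [Real.volume_real_Ioc_of_le hpq] at this
    exact (le_abs_self _).trans this
  have hleft := hhalf hlm fun u hu => abs_sub_le_of_le_of_le (hG hlm) le_rfl (hG hu.1.le) (hG hu.2)
  have hright := hhalf hmr fun u hu =>
    abs_sub_le_of_le_of_le le_rfl (hG hmr) (hG hu.1.le) (hG hu.2)
  rw [← Ioc_union_Ioc_eq_Ioc hlm hmr, setIntegral_union (Ioc_disjoint_Ioc_of_le le_rfl)
    measurableSet_Ioc (hG.integrableOn_abs_sub _ _ _) (hG.integrableOn_abs_sub _ _ _)]
  calc _ ≤ (G m - G l) * (m - l) + (G r - G m) * (r - m) := add_le_add hleft hright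
    _ = (r - l) / 2 * (G r - G l) := by simp only [m]; ring

theorem Monotone.sum_integral_abs_sub_midpoint_rpow_le {G : ℝ → ℝ} (hG : Monotone G) {ρ : ℝ}
    (hρ : 1 ≤ ρ) (N : ℕ) :
    ∑ i : Fin N, ∫ u in Ioc ((i : ℝ) / N) (((i : ℝ) + 1) / N),
        |G (((i : ℝ) / N + ((i : ℝ) + 1) / N) / 2) - G u| ^ ρ ≤
      (G 1 - G 0) ^ ρ / (2 * N) := by
  rcases N.eq_zero_or_pos with rfl | hN
  · simp
  have hN' : (0 : ℝ) < N := by exact_mod_cast hN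
  set D := G 1 - G 0
  have hD : 0 ≤ D := sub_nonneg.2 (hG zero_le_one)
  have hterm : ∀ i : Fin N, ∫ u in Ioc ((i : ℝ) / N) (((i : ℝ) + 1) / N),
      |G (((i : ℝ) / N + ((i : ℝ) + 1) / N) / 2) - G u| ^ ρ ≤
        D ^ (ρ - 1) * (1 / (2 * N) * (G (((i : ℝ) + 1) / N) - G ((i : ℝ) / N))) := by
    intro i
    set l := (i : ℝ) / N
    set r := ((i : ℝ) + 1) / N
    have hl : 0 ≤ l := by positivity
    have hr : r ≤ 1 := div_le_one_of_le₀ (by exact_mod_cast i.isLt) hN'.le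
    have hlr : l ≤ r := div_le_div_of_nonneg_right (by linarith) hN'.le
    have hG01 : ∀ u ∈ Icc l r, G u ∈ Icc (G 0) (G 1) := fun u hu =>
      ⟨hG (hl.trans hu.1), hG (hu.2.trans hr)⟩
    have hm : (l + r) / 2 ∈ Icc l r := ⟨by linarith, by linarith⟩
    calc _ ≤ ∫ u in Ioc l r, D ^ (ρ - 1) * |G ((l + r) / 2) - G u| := by
          refine integral_mono_of_nonneg (ae_of_all _ fun _ => by positivity)
            ((hG.integrableOn_abs_sub _ l r).const_mul _)
            (ae_restrict_of_forall_mem measurableSet_Ioc fun u hu => ?_)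
          have hu := hG01 u (Ioc_subset_Icc_self hu)
          have hm' := hG01 _ hm
          exact Real.rpow_le_rpow_sub_one_mul (abs_nonneg _)
            (abs_sub_le_of_le_of_le hm'.1 hm'.2 hu.1 hu.2) hρ
      _ = D ^ (ρ - 1) * ∫ u in Ioc l r, |G ((l + r) / 2) - G u| := integral_const_mul _ _
      _ ≤ D ^ (ρ - 1) * ((r - l) / 2 * (G r - G l)) := by
          gcongr; exact hG.integral_Ioc_abs_sub_midpoint_le hlr
      _ = D ^ (ρ - 1) * (1 / (2 * N) * (G r - G l)) := by
          congr 2; simp only [l, r]; field_simp; ring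
  have htelescope : ∑ i : Fin N, (G (((i : ℝ) + 1) / N) - G ((i : ℝ) / N)) = D := by
    have := Finset.sum_range_sub (fun j : ℕ => G ((j : ℝ) / N)) N
    rw [← Fin.sum_univ_eq_sum_range (fun j : ℕ => G (((j + 1 : ℕ) : ℝ) / N) - G ((j : ℝ) / N))]
      at this
    push_cast at this
    simpa [hN'.ne'] using this
  calc _ ≤ ∑ i : Fin N, D ^ (ρ - 1) * (1 / (2 * N) * (G (((i : ℝ) + 1) / N) - G ((i : ℝ) / N))) :=
        Finset.sum_le_sum fun i _ => hterm i
    _ = D ^ ρ / (2 * N) := by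
        rw [← Finset.mul_sum, ← Finset.mul_sum, htelescope,
          ← Real.rpow_sub_one_mul_self (ρ := ρ) hD (by linarith)]
        ring

section Quantile

variable (μ : Measure ℝ)

theorem bddBelow_setOf_le_cdf [IsProbabilityMeasure μ] {u : ℝ} (hu : 0 < u) :
    BddBelow {x | u ≤ cdf μ x} := by
  obtain ⟨x₀, hx₀⟩ := eventually_atBot.1 ((tendsto_cdf_atBot μ).eventually (gt_mem_nhds hu))
  exact ⟨x₀, fun x hx => le_of_not_gt fun hlt => (hx₀ x hlt.le).not_ge hx⟩

theorem nonempty_setOf_le_cdf {u : ℝ} (hu : u < 1) : {x | u ≤ cdf μ x}.Nonempty :=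
  (eventually_atTop.1 ((tendsto_cdf_atTop μ).eventually (lt_mem_nhds hu))).imp
    fun x hx => (hx x le_rfl).le

theorem monotoneOn_qf [IsProbabilityMeasure μ] : MonotoneOn (qf μ) (Ioo 0 1) :=
  fun _ hu _ hv huv =>
  csInf_le_csInf (bddBelow_setOf_le_cdf μ hu.1) (nonempty_setOf_le_cdf μ hv.2)
    fun _ hx => huv.trans hx

theorem qf_mem_Icc [IsProbabilityMeasure μ] {c d : ℝ} (h : μ (Icc c d)ᶜ = 0) {u : ℝ}
    (hu : u ∈ Ioc 0 1) :
    qf μ u ∈ Icc c d := by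
  have hd : d ∈ {x | u ≤ cdf μ x} := by
    have : μ (Iic d) = 1 := (prob_compl_eq_zero_iff measurableSet_Iic).1
      (measure_mono_null (compl_subset_compl.2 Icc_subset_Iic_self) h)
    simpa [cdf_eq_real, measureReal_def, this] using hu.2
  refine ⟨le_csInf ⟨d, hd⟩ fun x hx => le_of_not_gt fun hxc => ?_,
    csInf_le (bddBelow_setOf_le_cdf μ hu.1) hd⟩
  have : μ (Iic x) = 0 := measure_mono_null (show Iic x ⊆ (Icc c d)ᶜ from
    fun y hy hyc => (hy.trans_lt hxc).not_ge hyc.1) h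
  have hx : u ≤ cdf μ x := hx
  rw [cdf_eq_real, measureReal_def, this, ENNReal.toReal_zero] at hx
  exact hu.1.not_ge hx

theorem exists_monotone_eqOn_qf [IsProbabilityMeasure μ]
    (hcomp : ∃ K : Set ℝ, IsCompact K ∧ μ Kᶜ = 0) :
    ∃ G : ℝ → ℝ, Monotone G ∧ G 0 = Function.rightLim (qf μ) 0 ∧
      G 1 = Function.leftLim (qf μ) 1 ∧ EqOn G (qf μ) (Ioo 0 1) := by
  obtain ⟨K, hK, hK0⟩ := hcomp
  obtain ⟨c, hc⟩ := hK.bddBelow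
  obtain ⟨d, hd⟩ := hK.bddAbove
  have hcd : μ (Icc c d)ᶜ = 0 :=
    measure_mono_null (compl_subset_compl.2 fun x hx => ⟨hc hx, hd hx⟩) hK0
  have hbdd : qf μ '' Ioo 0 1 ⊆ Icc c d :=
    image_subset_iff.2 fun u hu => qf_mem_Icc μ hcd (Ioo_subset_Ioc_self hu)
  have hne : (Ioo (0 : ℝ) 1).Nonempty := nonempty_Ioo.2 zero_lt_one
  have ha : ∀ u ∈ Ioo 0 1, sInf (qf μ '' Ioo 0 1) ≤ qf μ u := fun u hu =>
    csInf_le (bddBelow_Icc.mono hbdd) (mem_image_of_mem _ hu)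
  have hb : ∀ u ∈ Ioo 0 1, qf μ u ≤ sSup (qf μ '' Ioo 0 1) := fun u hu =>
    le_csSup (bddAbove_Icc.mono hbdd) (mem_image_of_mem _ hu)
  refine ⟨_, (monotoneOn_qf μ).monotone_ite_Ioo ha hb
    ((ha _ hne.some_mem).trans (hb _ hne.some_mem)), ?_, ?_, fun u hu => ?_⟩
  · simpa using (rightLim_eq_of_tendsto
      ((monotoneOn_qf μ).tendsto_nhdsWithin_Ioo_right hne (bddBelow_Icc.mono hbdd))).symm
  · rw [if_neg (by norm_num), if_pos le_rfl]
    exact (leftLim_eq_of_tendsto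
      ((monotoneOn_qf μ).tendsto_nhdsWithin_Ioo_left hne (bddAbove_Icc.mono hbdd))).symm
  · simp [hu.1.not_ge, hu.2.not_ge]

end Quantile

theorem stmt16_general (μ : Measure ℝ) [IsProbabilityMeasure μ]
    (hcomp : ∃ K : Set ℝ, IsCompact K ∧ μ Kᶜ = 0) (ρ : ℝ) (hρ : 1 ≤ ρ) (N : ℕ) :
    eN μ ρ N ≤ (Function.leftLim (qf μ) 1 - Function.rightLim (qf μ) 0) /
      (2 * (N : ℝ)) ^ (1 / ρ) := by
  obtain ⟨G, hG, hG0, hG1, hGqf⟩ := exists_monotone_eqOn_qf μ hcomp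
  rw [← hG0, ← hG1]
  set x : Fin N → ℝ := fun i => G (((i : ℝ) / N + ((i : ℝ) + 1) / N) / 2)
  have hx : Monotone x := fun i j hij => hG (by gcongr <;> exact_mod_cast hij)
  have hcost_nonneg : ∀ y : Fin N → ℝ,
      0 ≤ ∑ i : Fin N, ∫ u in Ioc ((i : ℝ) / N) (((i : ℝ) + 1) / N), |y i - qf μ u| ^ ρ :=
    fun y => Finset.sum_nonneg fun i _ => integral_nonneg fun u => by positivity
  have hcost : ∀ i : Fin N, ∫ u in Ioc ((i : ℝ) / N) (((i : ℝ) + 1) / N), |x i - qf μ u| ^ ρ =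
      ∫ u in Ioc ((i : ℝ) / N) (((i : ℝ) + 1) / N), |x i - G u| ^ ρ := by
    intro i
    -- `qf μ 1` may differ from `G 1`; passing to open cells avoids the endpoint.
    rw [integral_Ioc_eq_integral_Ioo, integral_Ioc_eq_integral_Ioo]
    refine setIntegral_congr_fun measurableSet_Ioo fun u hu => ?_
    have hi : (i : ℝ) + 1 ≤ N := by exact_mod_cast i.isLt
    rw [hGqf ⟨(by positivity : (0 : ℝ) ≤ i / N).trans_lt hu.1,
      hu.2.trans_le (div_le_one_of_le₀ hi (Nat.cast_nonneg N))⟩]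
  have hD : 0 ≤ G 1 - G 0 := sub_nonneg.2 (hG zero_le_one)
  calc eN μ ρ N
      ≤ (∑ i : Fin N, ∫ u in Ioc ((i : ℝ) / N) (((i : ℝ) + 1) / N), |x i - qf μ u| ^ ρ) ^ (1 / ρ) :=
        csInf_le ⟨0, forall_mem_image.2 fun y _ => Real.rpow_nonneg (hcost_nonneg y) _⟩
          (mem_image_of_mem _ hx)
    _ ≤ ((G 1 - G 0) ^ ρ / (2 * N)) ^ (1 / ρ) := by
        rw [Finset.sum_congr rfl fun i _ => hcost i]
        exact Real.rpow_le_rpow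
          (Finset.sum_nonneg fun i _ => integral_nonneg fun u => by positivity)
          (hG.sum_integral_abs_sub_midpoint_rpow_le hρ N) (by positivity)
    _ = (G 1 - G 0) / (2 * N) ^ (1 / ρ) := by
        rw [Real.div_rpow (by positivity) (by positivity), one_div,
          Real.rpow_rpow_inv hD (by positivity)]

theorem stmt16 (μ : Measure ℝ) [IsProbabilityMeasure μ]
    (hcomp : ∃ K : Set ℝ, IsCompact K ∧ μ Kᶜ = 0) (ρ : ℝ) (hρ : 1 ≤ ρ) (N : ℕ)
    (hN : 1 ≤ N) :
    eN μ ρ N ≤ (Function.leftLim (qf μ) 1 - Function.rightLim (qf μ) 0) /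
      (2 * (N : ℝ)) ^ (1 / ρ) :=
  stmt16_general μ hcomp ρ hρ N
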